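/- Let y be a real number with y > √3 and define v₀(y) := max{V₃, 2C₃/|y²−3| + 1} with the constants C₁, C₂, C₃, V₁, V₂, V₃ as specified. Then for every real v ≥ v₀(y) one has G(v,y) < 1, where G(v,y) := v·∫_1^{√(v/(v−2))} ((v+y²)/(v+y²x²))^{(v+1)/2} dx. -/

import Mathlib

open MeasureTheory Real intervalIntegral

/-- The comparison function `G(v, y)`. -/
noncomputable def G (v y : ℝ) : ℝ :=
  v * ∫ x in (1 : ℝ)..Real.sqrt (v / (v - 2)),
    ((v + y ^ 2) / (v + y ^ 2 * x ^ 2)) ^ ((v + 1) / 2)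

/-
Write `w = v - 2` and `q = y ^ 2`. For `1 ≤ x ≤ √(v / w)` the base of the integrand is
`1 - q (x² - 1) / (v + q x²) ≤ exp (-2 w q (x - 1) / (v (w + q)))`, so the integrand is at most
`exp (-c (x - 1)) ≤ 1 - c (x - 1) + c² (x - 1)²` with `c = (v + 1) w q / (v (w + q))`.
Integrating gives `G ≤ v (δ - c δ² / 2 + c² δ³ / 3)` with
`δ = √(v / w) - 1 = 1/w - 1/(2w²) + O(w⁻³)`.
To first order in `1 / w` this bound is `1 - (q - 3) / (2w)`, which is below `1` exactly when
`q > 3`; the condition `v ≥ v₀` makes `w` large compared with `q² / (q - 3)`, which absorbs the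
higher-order terms.
-/

lemma exp_neg_le_one_sub_add_sq {r : ℝ} (hr : 0 ≤ r) : exp (-r) ≤ 1 - r + r ^ 2 := by
  have h : exp (-r) * exp r = 1 := by rw [← exp_add, neg_add_cancel, exp_zero]
  nlinarith [add_one_le_exp r, exp_pos (-r)]

lemma integral_one_sub_mul_add_sq (a c δ : ℝ) :
    ∫ x in a..a + δ, (1 - c * (x - a) + c ^ 2 * (x - a) ^ 2)
      = δ - c * δ ^ 2 / 2 + c ^ 2 * δ ^ 3 / 3 := by
  rw [integral_comp_sub_right (fun u => 1 - c * u + c ^ 2 * u ^ 2),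
    intervalIntegral.integral_add, intervalIntegral.integral_sub,
    intervalIntegral.integral_const_mul, intervalIntegral.integral_const_mul]
  · simp
    ring
  all_goals exact Continuous.intervalIntegrable (by fun_prop) _ _

lemma one_add_inv_add_two_le_sqrt {w : ℝ} (hw : 0 < w) :
    1 + 1 / (w + 2) ≤ sqrt ((w + 2) / w) := by
  refine le_sqrt_of_sq_le ?_
  rw [le_div_iff₀ hw, ← sub_nonneg]
  have key : (w + 2) - (1 + 1 / (w + 2)) ^ 2 * w = (3 * w + 8) / (w + 2) ^ 2 := by
    field_simp; ring
  rw [key]; positivity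

lemma sqrt_le_one_add_inv_sub {w : ℝ} (hw : 0 < w) :
    sqrt ((w + 2) / w) ≤ 1 + 1 / w - 1 / (2 * w ^ 2) + 1 / (2 * w ^ 3) := by
  have hB : 1 + 1 / w - 1 / (2 * w ^ 2) + 1 / (2 * w ^ 3)
      = (2 * w ^ 3 + 2 * w ^ 2 - w + 1) / (2 * w ^ 3) := by
    field_simp
  refine sqrt_le_iff.mpr ⟨?_, ?_⟩
  · rw [hB]; exact div_nonneg (by nlinarith [sq_nonneg (w - 1)]) (by positivity)
  · rw [div_le_iff₀ hw, ← sub_nonneg]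
    have key : (1 + 1 / w - 1 / (2 * w ^ 2) + 1 / (2 * w ^ 3)) ^ 2 * w - (w + 2)
        = (5 * w ^ 2 - 2 * w + 1) / (4 * w ^ 5) := by
      field_simp; ring
    rw [key]; exact div_nonneg (by nlinarith [sq_nonneg (w - 1)]) (by positivity)

lemma div_le_exp_neg {v x : ℝ} (y : ℝ) (hv : 2 < v) (hx : 1 ≤ x)
    (hxv : x ^ 2 * (v - 2) ≤ v) :
    (v + y ^ 2) / (v + y ^ 2 * x ^ 2)
      ≤ exp (-(2 * (v - 2) * y ^ 2 * (x - 1) / (v * (v - 2 + y ^ 2)))) := by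
  have hden : 0 < v + y ^ 2 * x ^ 2 := by positivity
  have hu : (v + y ^ 2) / (v + y ^ 2 * x ^ 2)
      = -(y ^ 2 * (x ^ 2 - 1) / (v + y ^ 2 * x ^ 2)) + 1 := by
    field_simp; ring
  have hlin : 2 * (v - 2) * y ^ 2 * (x - 1) / (v * (v - 2 + y ^ 2))
      ≤ y ^ 2 * (x ^ 2 - 1) / (v + y ^ 2 * x ^ 2) := by
    rw [div_le_div_iff₀ (by positivity) hden]
    have hy4 : 0 ≤ y ^ 4 := by positivity
    have hx1 : 0 ≤ x - 1 := by linarith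
    linarith [mul_nonneg (mul_nonneg (mul_nonneg (by linarith : (0:ℝ) ≤ v)
        (by linarith : (0:ℝ) ≤ v - 2)) (sq_nonneg y)) (sq_nonneg (x - 1)),
      mul_nonneg hy4 (mul_nonneg hx1 (by linarith : 0 ≤ v - (v - 2) * x ^ 2)),
      mul_nonneg (mul_nonneg (by linarith : (0:ℝ) ≤ v) hy4) (sq_nonneg (x - 1))]
  rw [hu]
  exact (add_one_le_exp _).trans (exp_le_exp.mpr (neg_le_neg hlin))

noncomputable def decayRate (v y : ℝ) : ℝ := (v + 1) * (v - 2) * y ^ 2 / (v * (v - 2 + y ^ 2))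

lemma decayRate_nonneg {v : ℝ} (y : ℝ) (hv : 2 < v) : 0 ≤ decayRate v y := by
  have : 0 < v - 2 := by linarith
  unfold decayRate
  positivity

lemma rpow_le_one_sub_mul_add_sq {v x : ℝ} (y : ℝ) (hv : 2 < v) (hx : 1 ≤ x)
    (hxv : x ^ 2 * (v - 2) ≤ v) :
    ((v + y ^ 2) / (v + y ^ 2 * x ^ 2)) ^ ((v + 1) / 2)
      ≤ 1 - decayRate v y * (x - 1) + decayRate v y ^ 2 * (x - 1) ^ 2 := by
  have hexp : exp (-(2 * (v - 2) * y ^ 2 * (x - 1) / (v * (v - 2 + y ^ 2)))) ^ ((v + 1) / 2)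
      = exp (-(decayRate v y * (x - 1))) := by
    rw [← exp_mul, decayRate]
    congr 1
    field_simp
  calc ((v + y ^ 2) / (v + y ^ 2 * x ^ 2)) ^ ((v + 1) / 2)
      ≤ exp (-(2 * (v - 2) * y ^ 2 * (x - 1) / (v * (v - 2 + y ^ 2)))) ^ ((v + 1) / 2) :=
        rpow_le_rpow (by positivity) (div_le_exp_neg y hv hx hxv) (by linarith)
    _ = exp (-(decayRate v y * (x - 1))) := hexp
    _ ≤ 1 - decayRate v y * (x - 1) + decayRate v y ^ 2 * (x - 1) ^ 2 := by
        rw [← mul_pow]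
        exact exp_neg_le_one_sub_add_sq (mul_nonneg (decayRate_nonneg y hv) (by linarith))

lemma G_le_integral (y : ℝ) {v : ℝ} (hv : 2 < v) :
    G v y ≤ v * ∫ x in (1 : ℝ)..sqrt (v / (v - 2)),
      (1 - decayRate v y * (x - 1) + decayRate v y ^ 2 * (x - 1) ^ 2) := by
  have hw : 0 < v - 2 := by linarith
  have hs : 1 ≤ sqrt (v / (v - 2)) := by
    rw [le_sqrt zero_le_one (by positivity), one_pow, le_div_iff₀ hw]
    linarith
  refine mul_le_mul_of_nonneg_left
    (integral_mono_on hs ?_ ?_ fun x ⟨hx, hxs⟩ => ?_) (by linarith)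
  · refine Continuous.intervalIntegrable ?_ _ _
    refine (continuous_const.div (by fun_prop) fun x => ?_).rpow_const fun _ => Or.inr (by linarith)
    exact (by positivity : 0 < v + y ^ 2 * x ^ 2).ne'
  · exact Continuous.intervalIntegrable (by fun_prop) _ _
  · refine rpow_le_one_sub_mul_add_sq y hv hx ?_
    rw [← le_div_iff₀ hw]
    exact (le_sqrt (by linarith) (by positivity)).mp hxs

lemma add_two_mul_cubic_le {w c δ : ℝ} (hw : 1 ≤ w) (hc : 0 ≤ c) (hδl : 1 / (w + 2) ≤ δ)
    (hδu : δ ≤ 1 / w - 1 / (2 * w ^ 2) + 1 / (2 * w ^ 3)) :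
    (w + 2) * (δ - c * δ ^ 2 / 2 + c ^ 2 * δ ^ 3 / 3)
      ≤ 1 + 3 / (2 * w) + 1 / w ^ 3 - c / (2 * (w + 2)) + (w + 2) * c ^ 2 / (3 * w ^ 3) := by
  have hw0 : 0 < w := by linarith
  have hδ0 : 0 ≤ δ := le_trans (by positivity) hδl
  have hlin : (w + 2) * δ ≤ 1 + 3 / (2 * w) + 1 / w ^ 3 := by
    have hgap : 1 + 3 / (2 * w) + 1 / w ^ 3
        - (w + 2) * (1 / w - 1 / (2 * w ^ 2) + 1 / (2 * w ^ 3)) = 1 / (2 * w ^ 2) := by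
      field_simp; ring
    nlinarith [(by positivity : 0 < 1 / (2 * w ^ 2))]
  have hsq : c / (w + 2) ≤ (w + 2) * (c * δ ^ 2) := by
    have h : (1 / (w + 2)) ^ 2 ≤ δ ^ 2 := pow_le_pow_left₀ (by positivity) hδl 2
    calc c / (w + 2) = (w + 2) * (c * (1 / (w + 2)) ^ 2) := by field_simp
      _ ≤ (w + 2) * (c * δ ^ 2) := by gcongr
  have hcube : (w + 2) * (c ^ 2 * δ ^ 3) ≤ (w + 2) * c ^ 2 / w ^ 3 := by
    have hδw : δ ≤ 1 / w := by
      have : 1 / (2 * w ^ 3) ≤ 1 / (2 * w ^ 2) :=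
        one_div_le_one_div_of_le (by positivity)
          (by nlinarith [pow_le_pow_right₀ hw (by norm_num : 2 ≤ 3)])
      linarith
    calc (w + 2) * (c ^ 2 * δ ^ 3) ≤ (w + 2) * (c ^ 2 * (1 / w) ^ 3) := by gcongr
      _ = (w + 2) * c ^ 2 / w ^ 3 := by field_simp
  have hsplit : (w + 2) * (δ - c * δ ^ 2 / 2 + c ^ 2 * δ ^ 3 / 3)
      = (w + 2) * δ - (w + 2) * (c * δ ^ 2) / 2 + (w + 2) * (c ^ 2 * δ ^ 3) / 3 := by ring
  have h2 : c / (w + 2) / 2 = c / (2 * (w + 2)) := by field_simp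
  have h3 : (w + 2) * c ^ 2 / w ^ 3 / 3 = (w + 2) * c ^ 2 / (3 * w ^ 3) := by field_simp
  rw [hsplit]
  linarith

lemma linear_term_dominates {w q : ℝ} (hw : 98 ≤ w) (hq : 3 < q) (hqw : q ≤ w)
    (hA : (26 / 3) * q ^ 2 + 35 * q + 25 ≤ (q - 3) * w) :
    3 / (2 * w) + 1 / w ^ 3 + (w + 2) * q ^ 2 / (3 * w ^ 3) < q * w / (w + q) / (2 * (w + 2)) := by
  have hw0 : 0 < w := by linarith
  have hpoly : 9 * w ^ 2 * (w + q) * (w + 2) + 6 * (w + q) * (w + 2)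
      + 2 * (w + 2) ^ 2 * (w + q) * q ^ 2 < 3 * q * w ^ 4 := by
    have hlead : 26 * q ^ 2 * w ^ 3 + 105 * q * w ^ 3 + 75 * w ^ 3 ≤ 3 * (q - 3) * w ^ 4 := by
      nlinarith [mul_le_mul_of_nonneg_left hA (by positivity : (0:ℝ) ≤ 3 * w ^ 3)]
    have h1 : 18 * q * w ^ 2 < 96 * q * w ^ 3 := by
      nlinarith [mul_pos (by linarith : (0:ℝ) < q) (mul_pos hw0 hw0)]
    have h2 : 6 * (w + q) * (w + 2) < 57 * w ^ 3 := by nlinarith [mul_pos hw0 hw0]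
    have h3 : 2 * (w + 2) ^ 2 * (w + q) * q ^ 2 ≤ 26 * q ^ 2 * w ^ 3 := by
      have : (w + 2) ^ 2 * (w + q) ≤ 13 * w ^ 3 := by nlinarith
      nlinarith [sq_nonneg q]
    nlinarith
  rw [← sub_pos]
  have hq0 : 0 < q := by linarith
  have key : q * w / (w + q) / (2 * (w + 2))
        - (3 / (2 * w) + 1 / w ^ 3 + (w + 2) * q ^ 2 / (3 * w ^ 3))
      = (3 * q * w ^ 4 - (9 * w ^ 2 * (w + q) * (w + 2) + 6 * (w + q) * (w + 2)
        + 2 * (w + 2) ^ 2 * (w + q) * q ^ 2)) / (6 * w ^ 3 * (w + q) * (w + 2)) := by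
    field_simp; ring
  rw [key]
  exact div_pos (by linarith) (by positivity)

theorem G_add_two_lt_one {w y : ℝ} (hw : 98 ≤ w) (hy : 3 < y ^ 2) (hyw : y ^ 2 ≤ w)
    (hA : (26 / 3) * (y ^ 2) ^ 2 + 35 * y ^ 2 + 25 ≤ (y ^ 2 - 3) * w) : G (w + 2) y < 1 := by
  have hw0 : 0 < w := by linarith
  have hG := G_le_integral y (by linarith : (2 : ℝ) < w + 2)
  rw [add_sub_cancel_right, ← add_sub_cancel (1 : ℝ) (sqrt ((w + 2) / w)),
    integral_one_sub_mul_add_sq] at hG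
  set c := decayRate (w + 2) y with hc
  have hc0 : 0 ≤ c := decayRate_nonneg y (by linarith : (2 : ℝ) < w + 2)
  have hc_eq : c = (w + 3) * w * y ^ 2 / ((w + 2) * (w + y ^ 2)) := by rw [hc, decayRate]; ring
  have hcl : y ^ 2 * w / (w + y ^ 2) ≤ c := by
    rw [hc_eq, div_le_div_iff₀ (by positivity) (by positivity)]
    nlinarith [mul_nonneg (mul_nonneg (sq_nonneg y) hw0.le) (add_nonneg hw0.le (sq_nonneg y))]
  have hcu : c ≤ y ^ 2 := by
    rw [hc_eq, div_le_iff₀ (by positivity)]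
    nlinarith [mul_nonneg (sq_nonneg y) hw0.le]
  calc G (w + 2) y
      ≤ (w + 2) * ((sqrt ((w + 2) / w) - 1) - c * (sqrt ((w + 2) / w) - 1) ^ 2 / 2
          + c ^ 2 * (sqrt ((w + 2) / w) - 1) ^ 3 / 3) := hG
    _ ≤ 1 + 3 / (2 * w) + 1 / w ^ 3 - c / (2 * (w + 2)) + (w + 2) * c ^ 2 / (3 * w ^ 3) :=
        add_two_mul_cubic_le (by linarith) hc0
          (by linarith [one_add_inv_add_two_le_sqrt hw0])
          (by linarith [sqrt_le_one_add_inv_sub hw0])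
    _ ≤ 1 + 3 / (2 * w) + 1 / w ^ 3 - y ^ 2 * w / (w + y ^ 2) / (2 * (w + 2))
          + (w + 2) * (y ^ 2) ^ 2 / (3 * w ^ 3) := by gcongr
    _ < 1 := by linarith [linear_term_dominates hw hy hyw hA]

theorem stmt_14 (y C₁ C₂ C₃ V₁ V₂ V₃ v₀ : ℝ)
    (hy : Real.sqrt 3 < y)
    (hC₁ : C₁ = 2 * y ^ 6 + (3 / 4) * y ^ 4)
    (hC₂ : C₂ = (9 / 4) * C₁ + (25 / 32) * y ^ 8
        + (3 / 2) * (C₁ ^ ((2 : ℝ) / 3) * y ^ ((8 : ℝ) / 3)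
          + C₁ ^ ((1 : ℝ) / 3) * y ^ ((16 : ℝ) / 3)))
    (hC₃ : C₃ = (13 / 3) * y ^ 4 + 18 * y ^ 2 + 2 * C₂ + 11)
    (hV₁ : V₁ = max 100 (8 * y ^ 2))
    (hV₂ : V₂ = max V₁ (max ((3 / 2) * y ^ 4) (Real.sqrt (2 * C₁))))
    (hV₃ : V₃ = max V₂ (max (2 + 2 * y ^ 2 / (1 + 2 * y))
        (2 + 2 * y ^ 4 / (1 + 2 * y ^ 2))))
    (hv₀ : v₀ = max V₃ (2 * C₃ / |y ^ 2 - 3| + 1)) :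
    ∀ v : ℝ, v₀ ≤ v → G v y < 1 := by
  intro v hv
  have hy0 : 0 < y := (sqrt_nonneg 3).trans_lt hy
  have hq : 3 < y ^ 2 := lt_sq_of_sqrt_lt hy
  rw [hv₀, abs_of_pos (by linarith : 0 < y ^ 2 - 3)] at hv
  have hC : 2 * C₃ ≤ (v - 1) * (y ^ 2 - 3) :=
    (div_le_iff₀ (by linarith)).mp (by linarith [le_of_max_le_right hv])
  obtain ⟨h100, h8⟩ : 100 ≤ v ∧ 8 * y ^ 2 ≤ v := by
    rw [hV₃, hV₂, hV₁] at hv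
    exact max_le_iff.mp (le_of_max_le_left (le_of_max_le_left (le_of_max_le_left hv)))
  have hC₂0 : 0 ≤ C₂ := by rw [hC₂, hC₁]; positivity
  have hA : (26 / 3) * (y ^ 2) ^ 2 + 35 * y ^ 2 + 25 ≤ (y ^ 2 - 3) * (v - 2) := by
    rw [hC₃] at hC
    linarith
  simpa using G_add_two_lt_one (by linarith) hq (by linarith) hA
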